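/- arXiv:1703.04050 — 2 statements merged into one kernel-verified Lean document; each statement's English description precedes it below -/
import Mathlib

section
/- Let q > 1, let Ω ⊂ ℝ^N (N ≥ 2) be a bounded domain with smooth boundary, and let a ∈ L^∞(Ω), b ∈ L^∞(∂Ω) be nonnegative with ∫_Ω a dx + ∫_{∂Ω} b dσ > 0. Then the set C_{1q} := { u ∈ W^{1,q}(Ω) : ∫_Ω a|u|^{q−2}u dx + ∫_{∂Ω} b|u|^{q−2}u dσ = 0 and ∫_Ω a|u|^q dx + ∫_{∂Ω} b|u|^q dσ = 1 } is nonempty. -/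
open MeasureTheory Filter Topology Set
open scoped ENNReal RealInnerProductSpace

noncomputable section

/-- Euclidean space `ℝ^N`. -/
abbrev Euc (N : ℕ) : Type := EuclideanSpace ℝ (Fin N)

/-- Surface measure `σ` on the boundary of `Ω`: the `(N-1)`-dimensional Hausdorff
measure restricted to the topological boundary of `Ω`. -/
def surfMeasure (N : ℕ) (Ω : Set (Euc N)) : Measure (Euc N) :=
  (μH[(N : ℝ) - 1]).restrict (frontier Ω)

/-- `Ω` has smooth boundary: near each boundary point, `Ω` is a sublevel set of a
smooth function with nonvanishing differential. -/
def HasSmoothBoundary {N : ℕ} (Ω : Set (Euc N)) : Prop :=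
  ∀ x ∈ frontier Ω, ∃ (U : Set (Euc N)) (f : Euc N → ℝ),
    IsOpen U ∧ x ∈ U ∧ ContDiff ℝ (⊤ : ℕ∞) f ∧ (∀ y ∈ U, fderiv ℝ f y ≠ 0) ∧
    Ω ∩ U = {y ∈ U | f y < 0}

/-- `Ω ⊂ ℝ^N` is a bounded domain (open, connected, bounded) with smooth boundary. -/
def IsBoundedSmoothDomain {N : ℕ} (Ω : Set (Euc N)) : Prop :=
  IsOpen Ω ∧ IsConnected Ω ∧ Bornology.IsBounded Ω ∧ HasSmoothBoundary Ω

/-- Membership in the Sobolev space `W^{1,r}(Ω)`: `u` and its gradient belong to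
`L^r(Ω)` (the gradient being understood via `gradient`). -/
def MemW1 {N : ℕ} (r : ℝ) (Ω : Set (Euc N)) (u : Euc N → ℝ) : Prop :=
  MemLp u (ENNReal.ofReal r) (volume.restrict Ω) ∧
  MemLp (fun x => gradient u x) (ENNReal.ofReal r) (volume.restrict Ω)

/-- Hypotheses `(H_ab)`: `a ∈ L^∞(Ω)`, `b ∈ L^∞(∂Ω)` are nonnegative and
`∫_Ω a dx + ∫_{∂Ω} b dσ > 0`. -/
def WeightHyp {N : ℕ} (Ω : Set (Euc N)) (a b : Euc N → ℝ) : Prop :=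
  MemLp a ⊤ (volume.restrict Ω) ∧ MemLp b ⊤ (surfMeasure N Ω) ∧
  (∀ x, 0 ≤ a x) ∧ (∀ x, 0 ≤ b x) ∧
  0 < (∫ x in Ω, a x) + ∫ x, b x ∂(surfMeasure N Ω)

/-- The weighted form `∫_Ω a |u|^q dx + ∫_{∂Ω} b |u|^q dσ`. -/
def qForm {N : ℕ} (q : ℝ) (Ω : Set (Euc N)) (a b : Euc N → ℝ) (u : Euc N → ℝ) : ℝ :=
  (∫ x in Ω, a x * |u x| ^ q) + ∫ x, b x * |u x| ^ q ∂(surfMeasure N Ω)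

/-- The signed form `∫_Ω a |u|^{q-2}u dx + ∫_{∂Ω} b |u|^{q-2}u dσ`. -/
def qFormSigned {N : ℕ} (q : ℝ) (Ω : Set (Euc N)) (a b : Euc N → ℝ) (u : Euc N → ℝ) : ℝ :=
  (∫ x in Ω, a x * |u x| ^ (q - 2) * u x) + ∫ x, b x * |u x| ^ (q - 2) * u x ∂(surfMeasure N Ω)

/-- `u` is nontrivial: not a.e. zero in `Ω`. -/
def Nontriv {N : ℕ} (Ω : Set (Euc N)) (u : Euc N → ℝ) : Prop :=
  ¬ (u =ᵐ[volume.restrict Ω] (0 : Euc N → ℝ))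

/-- The cone `𝒞_r ⊂ W^{1,r}(Ω)` of functions with
`∫_Ω a |u|^{r-2}u dx + ∫_{∂Ω} b |u|^{r-2}u dσ = 0`. -/
def coneCr {N : ℕ} (r : ℝ) (Ω : Set (Euc N)) (a b : Euc N → ℝ) : Set (Euc N → ℝ) :=
  {u | MemW1 r Ω u ∧ qFormSigned r Ω a b u = 0}

/-- The cone `𝒞 ⊂ W = W^{1,max{p,q}}(Ω)`. -/
def coneC {N : ℕ} (p q : ℝ) (Ω : Set (Euc N)) (a b : Euc N → ℝ) : Set (Euc N → ℝ) :=
  {u | MemW1 (max p q) Ω u ∧ qFormSigned q Ω a b u = 0}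

/-- `(lam, u)` is an eigenpair of the Steklov-type problem for the `(p,q)`-Laplacian,
in the weak (variational) sense. -/
def IsEigenpair {N : ℕ} (p q : ℝ) (Ω : Set (Euc N)) (a b : Euc N → ℝ)
    (lam : ℝ) (u : Euc N → ℝ) : Prop :=
  MemW1 (max p q) Ω u ∧ Nontriv Ω u ∧
  ∀ v : Euc N → ℝ, MemW1 (max p q) Ω v →
    (∫ x in Ω, (‖gradient u x‖ ^ (p - 2) + ‖gradient u x‖ ^ (q - 2)) *
        ⟪gradient u x, gradient v x⟫) =
      lam * ((∫ x in Ω, a x * |u x| ^ (q - 2) * u x * v x) +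
        ∫ x, b x * |u x| ^ (q - 2) * u x * v x ∂(surfMeasure N Ω))

/-- `lam` is an eigenvalue of the Steklov-type problem for the `(p,q)`-Laplacian. -/
def IsEigenvalue {N : ℕ} (p q : ℝ) (Ω : Set (Euc N)) (a b : Euc N → ℝ) (lam : ℝ) : Prop :=
  ∃ u, IsEigenpair p q Ω a b lam u

/-- `λ₁`: the infimum of the Rayleigh-type quotients over `𝒞 \ {0}`; quotients with
zero denominator are interpreted as `+∞` and hence do not contribute. -/
def lambda1 {N : ℕ} (p q : ℝ) (Ω : Set (Euc N)) (a b : Euc N → ℝ) : ℝ :=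
  sInf {r : ℝ | ∃ u ∈ coneC p q Ω a b, Nontriv Ω u ∧ qForm q Ω a b u ≠ 0 ∧
    r = (∫ x in Ω, ‖gradient u x‖ ^ q) / qForm q Ω a b u}

/-- The usual norm of the Sobolev space `W^{1,r}(Ω)`. -/
def sobNorm {N : ℕ} (r : ℝ) (Ω : Set (Euc N)) (u : Euc N → ℝ) : ℝ :=
  (∫ x in Ω, |u x| ^ r) ^ (1 / r) + (∫ x in Ω, ‖gradient u x‖ ^ r) ^ (1 / r)

/-- The norm `‖u‖_{ab} = ‖∇u‖_{L^p(Ω)} + (∫_Ω a|u|^q dx + ∫_{∂Ω} b|u|^q dσ)^{1/q}`. -/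
def abNorm {N : ℕ} (p q : ℝ) (Ω : Set (Euc N)) (a b : Euc N → ℝ) (u : Euc N → ℝ) : ℝ :=
  (∫ x in Ω, ‖gradient u x‖ ^ p) ^ (1 / p) + (qForm q Ω a b u) ^ (1 / q)

/-- The energy functional `J_λ`. -/
def Jfun {N : ℕ} (p q lam : ℝ) (Ω : Set (Euc N)) (a b : Euc N → ℝ) (u : Euc N → ℝ) : ℝ :=
  (1 / p) * (∫ x in Ω, ‖gradient u x‖ ^ p) + (1 / q) * (∫ x in Ω, ‖gradient u x‖ ^ q)
    - (lam / q) * qForm q Ω a b u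

/-- The Nehari-type set `𝒩_λ`. -/
def Nehari {N : ℕ} (p q lam : ℝ) (Ω : Set (Euc N)) (a b : Euc N → ℝ) : Set (Euc N → ℝ) :=
  {v | v ∈ coneC p q Ω a b ∧ Nontriv Ω v ∧
    (∫ x in Ω, (‖gradient v x‖ ^ p + ‖gradient v x‖ ^ q)) = lam * qForm q Ω a b v}

/-- Weak convergence `u_n ⇀ u` in `W^{1,r}(Ω)`: the functions and their gradients
converge weakly in `L^r(Ω)`, i.e. tested against every `L^{r'}(Ω)` function,
`r' = r/(r-1)` being the conjugate exponent. -/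
def WeakW1Conv {N : ℕ} (r : ℝ) (Ω : Set (Euc N)) (un : ℕ → Euc N → ℝ) (u : Euc N → ℝ) : Prop :=
  (∀ g : Euc N → ℝ, MemLp g (ENNReal.ofReal (r / (r - 1))) (volume.restrict Ω) →
    Tendsto (fun n => ∫ x in Ω, un n x * g x) atTop (𝓝 (∫ x in Ω, u x * g x))) ∧
  (∀ G : Euc N → Euc N, MemLp G (ENNReal.ofReal (r / (r - 1))) (volume.restrict Ω) →
    Tendsto (fun n => ∫ x in Ω, ⟪gradient (un n) x, G x⟫) atTop
      (𝓝 (∫ x in Ω, ⟪gradient u x, G x⟫)))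

/-- `(lam, u)` is an eigenpair of the Steklov-type problem for the `q`-Laplacian. -/
def IsEigenpairQ {N : ℕ} (q : ℝ) (Ω : Set (Euc N)) (a b : Euc N → ℝ)
    (lam : ℝ) (u : Euc N → ℝ) : Prop :=
  MemW1 q Ω u ∧ Nontriv Ω u ∧
  ∀ v : Euc N → ℝ, MemW1 q Ω v →
    (∫ x in Ω, ‖gradient u x‖ ^ (q - 2) * ⟪gradient u x, gradient v x⟫) =
      lam * ((∫ x in Ω, a x * |u x| ^ (q - 2) * u x * v x) +
        ∫ x, b x * |u x| ^ (q - 2) * u x * v x ∂(surfMeasure N Ω))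

/-- `lam` is an eigenvalue of the Steklov-type problem for the `q`-Laplacian. -/
def IsEigenvalueQ {N : ℕ} (q : ℝ) (Ω : Set (Euc N)) (a b : Euc N → ℝ) (lam : ℝ) : Prop :=
  ∃ u, IsEigenpairQ q Ω a b lam u

/-- `λ_{1q}`: the infimum of the Rayleigh quotients over `𝒞_q \ {0}`; quotients with
zero denominator are interpreted as `+∞` and hence do not contribute. -/
def lambda1q {N : ℕ} (q : ℝ) (Ω : Set (Euc N)) (a b : Euc N → ℝ) : ℝ :=
  sInf {r : ℝ | ∃ u ∈ coneCr q Ω a b, Nontriv Ω u ∧ qForm q Ω a b u ≠ 0 ∧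
    r = (∫ x in Ω, ‖gradient u x‖ ^ q) / qForm q Ω a b u}

/-- `λ̃₁`: the alternative characterization of `λ₁` from Remark 2 (2.4); quotients
with zero denominator are interpreted as `+∞` and hence do not contribute. -/
def lambda1tilde {N : ℕ} (p q : ℝ) (Ω : Set (Euc N)) (a b : Euc N → ℝ) : ℝ :=
  sInf {r : ℝ | ∃ u ∈ coneC p q Ω a b, Nontriv Ω u ∧ qForm q Ω a b u ≠ 0 ∧
    r = ((1 / q) * (∫ x in Ω, ‖gradient u x‖ ^ q) + (1 / p) * (∫ x in Ω, ‖gradient u x‖ ^ p)) /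
      ((1 / q) * qForm q Ω a b u)}

end

namespace ConeAux

abbrev Euc' (N : ℕ) : Type := EuclideanSpace ℝ (Fin N)

variable {N : ℕ} {q : ℝ}

lemma habs (hq : 1 < q) (s : ℝ) : |s| ^ (q-2) * |s| = |s| ^ (q-1) := by
  rcases eq_or_ne s 0 with rfl | h
  · simp [Real.zero_rpow (show q - 1 ≠ 0 by intro h; linarith)]
  · rw [show q - 1 = (q-2) + 1 by ring, Real.rpow_add_one (abs_ne_zero.mpr h)]

lemma phi_abs (hq : 1 < q) (s : ℝ) : |(|s| ^ (q-2) * s)| = |s| ^ (q-1) := by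
  rw [abs_mul, abs_of_nonneg (Real.rpow_nonneg (abs_nonneg s) _), habs hq]

lemma phi_cont (hq : 1 < q) : Continuous fun s : ℝ => |s| ^ (q-2) * s := by
  rw [continuous_iff_continuousAt]; intro s
  rcases eq_or_ne s 0 with rfl | hs
  · have h1 : Tendsto (fun s : ℝ => |s| ^ (q-1)) (𝓝 0) (𝓝 0) := by
      have h := (continuous_abs.continuousAt (x := (0:ℝ))).rpow_const
        (p := q - 1) (Or.inr (by linarith))
      simpa [ContinuousAt, Real.zero_rpow (show q - 1 ≠ 0 by intro h; linarith)] using h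
    have h2 : Tendsto (fun s : ℝ => |s| ^ (q-2) * s) (𝓝 0) (𝓝 0) :=
      squeeze_zero_norm (fun s => by rw [Real.norm_eq_abs, phi_abs hq]) h1
    simpa [ContinuousAt] using h2
  · exact ((continuous_abs.continuousAt.rpow_const
      (Or.inl (abs_ne_zero.mpr hs))).mul continuousAt_id)

lemma phi_ge_one (hq : 1 < q) {s : ℝ} (hs : 1 ≤ s) : 1 ≤ |s| ^ (q-2) * s := by
  have h0 : (0:ℝ) < s := by linarith
  rw [abs_of_pos h0, ← Real.rpow_add_one (ne_of_gt h0)]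
  calc (1:ℝ) = 1 ^ ((q-2)+1) := (Real.one_rpow _).symm
    _ ≤ s ^ ((q-2)+1) := Real.rpow_le_rpow zero_le_one hs (by linarith)

lemma phi_le_neg_one (hq : 1 < q) {s : ℝ} (hs : s ≤ -1) : |s| ^ (q-2) * s ≤ -1 := by
  have h : 1 ≤ -s := by linarith
  have h2 := phi_ge_one hq h
  rw [abs_neg, mul_neg] at h2
  linarith

lemma coord_abs_le_norm (x : Euc' N) (i : Fin N) : |x i| ≤ ‖x‖ := by
  rw [EuclideanSpace.norm_eq, ← Real.sqrt_sq_eq_abs]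
  apply Real.sqrt_le_sqrt
  have := Finset.single_le_sum (f := fun j => ‖x j‖^2) (fun j _ => sq_nonneg _)
    (Finset.mem_univ i)
  simpa [Real.norm_eq_abs, sq_abs] using this

lemma key (hq : 1 < q) (μ : Measure (Euc' N)) (w : Euc' N → ℝ)
    (hw0 : ∀ x, 0 ≤ w x) (hwi : Integrable w μ) (hwpos : 0 < ∫ x, w x ∂μ)
    (hatom : ∀ p : Euc' N, μ {p} = 0)
    {R : ℝ} (hR : 0 ≤ R) (hbd : ∀ᵐ x ∂μ, w x ≠ 0 → ‖x‖ ≤ R) :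
    ∃ (i : Fin N) (t : ℝ),
      (∫ x, w x * (|x i - t| ^ (q-2) * (x i - t)) ∂μ) = 0 ∧
      ¬ ((fun x => w x * |x i - t| ^ q) =ᵐ[μ] 0) := by
  have hq1 : (0:ℝ) ≤ q - 1 := by linarith
  have hmeas : ∀ (i : Fin N) (t : ℝ),
      AEStronglyMeasurable (fun x : Euc' N => w x * (|x i - t| ^ (q-2) * (x i - t))) μ := by
    intro i t
    exact hwi.aestronglyMeasurable.mul
      (((phi_cont hq).comp ((EuclideanSpace.proj i).continuous.sub
        continuous_const)).aestronglyMeasurable)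
  have hbound : ∀ (i : Fin N) (t : ℝ) (x : Euc' N), w x ≠ 0 → ‖x‖ ≤ R →
      ‖w x * (|x i - t| ^ (q-2) * (x i - t))‖ ≤ (R + |t|) ^ (q-1) * w x := by
    intro i t x hwx hx
    rw [norm_mul, Real.norm_eq_abs, Real.norm_eq_abs, phi_abs hq,
      abs_of_nonneg (hw0 x), mul_comm]
    apply mul_le_mul_of_nonneg_right _ (hw0 x)
    apply Real.rpow_le_rpow (abs_nonneg _) _ hq1
    calc |x i - t| ≤ |x i| + |t| := abs_sub _ _
      _ ≤ R + |t| := by have := coord_abs_le_norm x i; linarith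
  have hint : ∀ (i : Fin N) (t : ℝ),
      Integrable (fun x => w x * (|x i - t| ^ (q-2) * (x i - t))) μ := by
    intro i t
    apply Integrable.mono' (hwi.const_mul ((R + |t|) ^ (q-1))) (hmeas i t)
    filter_upwards [hbd] with x hx
    by_cases hwx : w x = 0
    · simp [hwx, Real.rpow_nonneg]
    · exact hbound i t x hwx (hx hwx)
  set F : Fin N → ℝ → ℝ :=
    fun i t => ∫ x, w x * (|x i - t| ^ (q-2) * (x i - t)) ∂μ with hF
  have hFcont : ∀ i, Continuous (F i) := by
    intro i
    rw [continuous_iff_continuousAt]; intro t0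
    apply continuousAt_of_dominated (bound := fun x => (R + |t0| + 1) ^ (q-1) * w x)
    · exact Eventually.of_forall fun t => hmeas i t
    · filter_upwards [Metric.ball_mem_nhds t0 zero_lt_one] with t ht
      filter_upwards [hbd] with x hx
      by_cases hwx : w x = 0
      · simp [hwx, Real.rpow_nonneg]
      · refine le_trans (hbound i t x hwx (hx hwx)) ?_
        apply mul_le_mul_of_nonneg_right _ (hw0 x)
        apply Real.rpow_le_rpow (by positivity) _ hq1
        have : |t - t0| < 1 := by simpa [Real.dist_eq] using ht
        have := abs_sub_abs_le_abs_sub t t0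
        linarith
    · exact hwi.const_mul _
    · refine Eventually.of_forall fun x => ?_
      exact (continuousAt_const.mul (((phi_cont hq).comp
        (continuous_const.sub continuous_id)).continuousAt))
  have hIpos := hwpos
  have hFlo : ∀ i, 0 < F i (-(R+1)) := by
    intro i
    have hle : (∫ x, w x ∂μ) ≤ F i (-(R+1)) := by
      apply integral_mono_ae hwi (hint i _)
      filter_upwards [hbd] with x hx
      by_cases hwx : w x = 0
      · simp [hwx]
      · have hxR := hx hwx
        have h1 : (1:ℝ) ≤ x i - (-(R+1)) := by
          have := coord_abs_le_norm x i
          have := abs_le.mp (le_trans (coord_abs_le_norm x i) hxR)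
          simp only []
          linarith [this.1]
        have h2 := phi_ge_one hq h1
        calc w x = w x * 1 := (mul_one _).symm
          _ ≤ w x * (|x i - (-(R+1))| ^ (q-2) * (x i - (-(R+1)))) :=
            mul_le_mul_of_nonneg_left h2 (hw0 x)
    linarith
  have hFhi : ∀ i, F i (R+1) < 0 := by
    intro i
    have hle : F i (R+1) ≤ ∫ x, (-1 : ℝ) * w x ∂μ := by
      apply integral_mono_ae (hint i _) (hwi.const_mul _)
      filter_upwards [hbd] with x hx
      by_cases hwx : w x = 0
      · simp [hwx]
      · have hxR := hx hwx
        have h1 : x i - (R+1) ≤ -1 := by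
          have := abs_le.mp (le_trans (coord_abs_le_norm x i) hxR)
          linarith [this.2]
        have h2 := phi_le_neg_one hq h1
        calc w x * (|x i - (R+1)| ^ (q-2) * (x i - (R+1))) ≤ w x * (-1) :=
            mul_le_mul_of_nonneg_left h2 (hw0 x)
          _ = -1 * w x := by ring
    rw [integral_const_mul] at hle
    linarith
  have hroot : ∀ i, ∃ t, F i t = 0 := by
    intro i
    have h1 : -(R+1) ≤ R+1 := by linarith
    have h2 := intermediate_value_Icc' h1 (hFcont i).continuousOn
    have h0 : (0:ℝ) ∈ Icc (F i (R+1)) (F i (-(R+1))) :=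
      ⟨(hFhi i).le, (hFlo i).le⟩
    obtain ⟨t, _, ht⟩ := h2 h0
    exact ⟨t, ht⟩
  choose t ht using hroot
  by_cases hall : ∀ i, (fun x => w x * |x i - t i| ^ q) =ᵐ[μ] 0
  · exfalso
    have h1 : ∀ᵐ x ∂μ, ∀ i, w x * |x i - t i| ^ q = 0 := by
      rw [ae_all_iff]
      intro i
      filter_upwards [hall i] with x hx using hx
    set p : Euc' N := (show Euc' N from WithLp.toLp 2 (fun i => t i)) with hp
    have h2 : ∀ᵐ x ∂μ, x ∈ ({p} : Set (Euc' N))ᶜ := compl_mem_ae_iff.mpr (hatom p)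
    have h3 : ∀ᵐ x ∂μ, w x = 0 := by
      filter_upwards [h1, h2] with x hx hxp
      by_contra hwx
      apply hxp
      show x = p
      ext i
      have hxi := hx i
      rcases mul_eq_zero.mp hxi with h | h
      · exact absurd h hwx
      · have h4 := ((Real.rpow_eq_zero_iff_of_nonneg (abs_nonneg _)).mp h).1
        have h5 : x i - t i = 0 := abs_eq_zero.mp h4
        show x i = t i
        linarith
    have : ∫ x, w x ∂μ = 0 := by
      rw [integral_eq_zero_of_ae h3]
    linarith
  · push_neg at hall
    obtain ⟨i, hi⟩ := hall
    exact ⟨i, t i, ht i, hi⟩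

end ConeAux

section Aux2
open MeasureTheory Filter Topology Set Bornology ConeAux
open scoped ENNReal RealInnerProductSpace

variable {N : ℕ} {q : ℝ} {Ω : Set (Euc N)} {a b : Euc N → ℝ}

lemma qFormSigned_smul (hq : 1 < q) (u : Euc N → ℝ) {s : ℝ} (hs : 0 < s) :
    qFormSigned q Ω a b (fun x => s * u x) = s^(q-1) * qFormSigned q Ω a b u := by
  have hpt : ∀ (c v : ℝ),
      c * |s * v| ^ (q-2) * (s * v) = s^(q-1) * (c * |v| ^ (q-2) * v) := by
    intro c v
    have hss : s ^ (q-1) = s ^ (q-2) * s := by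
      rw [show q - 1 = (q-2)+1 by ring, Real.rpow_add_one (ne_of_gt hs)]
    rw [abs_mul, abs_of_pos hs, Real.mul_rpow hs.le (abs_nonneg v), hss]; ring
  simp only [qFormSigned]
  have h1 : (∫ x in Ω, a x * |s * u x| ^ (q-2) * (s * u x))
      = s^(q-1) * ∫ x in Ω, a x * |u x| ^ (q-2) * u x := by
    rw [← integral_const_mul]
    exact integral_congr_ae (.of_forall fun x => hpt (a x) (u x))
  have h2 : (∫ x, b x * |s * u x| ^ (q-2) * (s * u x) ∂(surfMeasure N Ω))
      = s^(q-1) * ∫ x, b x * |u x| ^ (q-2) * u x ∂(surfMeasure N Ω) := by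
    rw [← integral_const_mul]
    exact integral_congr_ae (.of_forall fun x => hpt (b x) (u x))
  rw [h1, h2]; ring

lemma qForm_smul (hq : 1 < q) (u : Euc N → ℝ) {s : ℝ} (hs : 0 < s) :
    qForm q Ω a b (fun x => s * u x) = s^q * qForm q Ω a b u := by
  have hpt : ∀ (c v : ℝ), c * |s * v| ^ q = s^q * (c * |v| ^ q) := by
    intro c v
    rw [abs_mul, abs_of_pos hs, Real.mul_rpow hs.le (abs_nonneg v)]; ring
  simp only [qForm]
  have h1 : (∫ x in Ω, a x * |s * u x| ^ q) = s^q * ∫ x in Ω, a x * |u x| ^ q := by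
    rw [← integral_const_mul]
    exact integral_congr_ae (.of_forall fun x => hpt (a x) (u x))
  have h2 : (∫ x, b x * |s * u x| ^ q ∂(surfMeasure N Ω))
      = s^q * ∫ x, b x * |u x| ^ q ∂(surfMeasure N Ω) := by
    rw [← integral_const_mul]
    exact integral_congr_ae (.of_forall fun x => hpt (b x) (u x))
  rw [h1, h2]; ring

lemma memW1_of_contDiff (hb : Bornology.IsBounded Ω) (hm : MeasurableSet Ω)
    (r : ℝ) {u : Euc N → ℝ} (hu : ContDiff ℝ (⊤ : ℕ∞) u) : MemW1 r Ω u := by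
  haveI hfin : IsFiniteMeasure (volume.restrict Ω) :=
    ⟨by rw [Measure.restrict_apply_univ]; exact hb.measure_lt_top⟩
  have hcomp : IsCompact (closure Ω) :=
    Metric.isCompact_of_isClosed_isBounded isClosed_closure hb.closure
  constructor
  · obtain ⟨C, hC⟩ := hcomp.exists_bound_of_continuousOn hu.continuous.continuousOn
    exact MemLp.of_bound hu.continuous.aestronglyMeasurable C
      (by filter_upwards [ae_restrict_mem hm] with x hx using hC x (subset_closure hx))
  · have hg : Continuous fun x => gradient u x := by
      show Continuous fun x => (InnerProductSpace.toDual ℝ (Euc N)).symm (fderiv ℝ u x)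
      exact (LinearIsometryEquiv.continuous _).comp (hu.continuous_fderiv (by simp))
    obtain ⟨C, hC⟩ := hcomp.exists_bound_of_continuousOn hg.continuousOn
    exact MemLp.of_bound hg.aestronglyMeasurable C
      (by filter_upwards [ae_restrict_mem hm] with x hx using hC x (subset_closure hx))

lemma finish_lemma (hq : 1 < q) (hb : Bornology.IsBounded Ω) (hm : MeasurableSet Ω)
    {u₀ : Euc N → ℝ} (hu₀ : ContDiff ℝ (⊤ : ℕ∞) u₀)
    (h0 : qFormSigned q Ω a b u₀ = 0) (hpos : 0 < qForm q Ω a b u₀) :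
    ∃ u : Euc N → ℝ, MemW1 q Ω u ∧ qFormSigned q Ω a b u = 0 ∧ qForm q Ω a b u = 1 := by
  have hq0 : (0:ℝ) < q := by linarith
  set c := qForm q Ω a b u₀ with hc
  set s := c ^ (-(1/q)) with hsdef
  have hs : 0 < s := Real.rpow_pos_of_pos hpos _
  refine ⟨fun x => s * u₀ x, ?_, ?_, ?_⟩
  · exact memW1_of_contDiff hb hm q (contDiff_const.mul hu₀)
  · rw [qFormSigned_smul hq u₀ hs, h0, mul_zero]
  · rw [qForm_smul hq u₀ hs]
    have hsq : s ^ q = c⁻¹ := by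
      rw [hsdef, ← Real.rpow_mul hpos.le,
        show -(1/q) * q = -1 by field_simp, Real.rpow_neg_one]
    rw [hsq, inv_mul_cancel₀ (ne_of_gt hpos)]

end Aux2
set_option maxHeartbeats 1000000 in
/-- the normalized constraint set `𝒞_{1q}` is nonempty. -/
theorem coneC1q_nonempty {N : ℕ} (hN : 2 ≤ N) (Ω : Set (Euc N)) (a b : Euc N → ℝ)
    (q : ℝ) (hq : 1 < q)
    (hΩ : IsBoundedSmoothDomain Ω) (hab : WeightHyp Ω a b) :
    ∃ u : Euc N → ℝ, MemW1 q Ω u ∧ qFormSigned q Ω a b u = 0 ∧ qForm q Ω a b u = 1 := by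
  classical
  open MeasureTheory Filter Topology Set ConeAux in
  obtain ⟨hΩo, hΩconn, hΩb, _⟩ := hΩ
  obtain ⟨haL, hbL, ha0, hb0, hsum⟩ := hab
  have hm : MeasurableSet Ω := hΩo.measurableSet
  have hq0 : (0:ℝ) < q := by linarith
  have hqne : q ≠ 0 := ne_of_gt hq0
  have hq1ne : q - 1 ≠ 0 := by intro h; linarith
  have hq1' : (0:ℝ) ≤ q - 1 := by linarith
  haveI hfin : IsFiniteMeasure (volume.restrict Ω) :=
    ⟨by rw [Measure.restrict_apply_univ]; exact hΩb.measure_lt_top⟩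
  have haint : Integrable a (volume.restrict Ω) := haL.integrable le_top
  obtain ⟨r, hr⟩ := hΩb.subset_closedBall (0 : Euc N)
  set R := max r 0 with hRdef
  have hR0 : (0:ℝ) ≤ R := le_max_right _ _
  have hRb : ∀ x ∈ closure Ω, ‖x‖ ≤ R := by
    intro x hx
    have h1 : closure Ω ⊆ Metric.closedBall 0 r :=
      closure_minimal hr Metric.isClosed_closedBall
    have := h1 hx
    rw [Metric.mem_closedBall, dist_zero_right] at this
    exact le_trans this (le_max_left _ _)
  haveI : Nonempty (Fin N) := ⟨⟨0, by omega⟩⟩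
  have hatomv : ∀ p : Euc N, (volume.restrict Ω) {p} = 0 := by
    intro p
    rw [Measure.restrict_apply (measurableSet_singleton p)]
    refine le_antisymm (le_trans (measure_mono inter_subset_left) ?_) zero_le
    rw [measure_singleton]
  by_cases hA : 0 < ∫ x in Ω, a x
  · -- interior case
    obtain ⟨η, hηsupp, hηsm, hηrange⟩ := IsOpen.exists_contDiff_support_eq (n := (⊤ : ℕ∞)) hΩo
    have hη0 : ∀ x, 0 ≤ η x := fun x => (hηrange (mem_range_self x)).1
    have hη1 : ∀ x, η x ≤ 1 := fun x => (hηrange (mem_range_self x)).2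
    have hηΩ : ∀ x ∈ Ω, η x ≠ 0 := fun x hx => by
      rw [← hηsupp] at hx; exact hx
    have hηout : ∀ x, x ∉ Ω → η x = 0 := fun x hx => by
      by_contra h
      exact hx (hηsupp ▸ (Function.mem_support.mpr h))
    set w : Euc N → ℝ := fun x => a x * η x ^ (q-1) with hwdef
    have hηq1cont : Continuous fun x => η x ^ (q-1) :=
      hηsm.continuous.rpow_const fun x => Or.inr hq1'
    have hwi : Integrable w (volume.restrict Ω) := by
      have h1 : Integrable (fun x => (η x ^ (q-1)) * a x) (volume.restrict Ω) :=
        haint.bdd_mul (c := 1) hηq1cont.aestronglyMeasurable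
          (Eventually.of_forall fun x => by
            rw [Real.norm_eq_abs, abs_of_nonneg (Real.rpow_nonneg (hη0 x) _)]
            exact Real.rpow_le_one (hη0 x) (hη1 x) hq1')
      exact h1.congr (Eventually.of_forall fun x => mul_comm _ _)
    have hw0 : ∀ x, 0 ≤ w x := fun x =>
      mul_nonneg (ha0 x) (Real.rpow_nonneg (hη0 x) _)
    have hwpos : 0 < ∫ x, w x ∂(volume.restrict Ω) := by
      rw [integral_pos_iff_support_of_nonneg_ae (Eventually.of_forall hw0) hwi]
      have h1 : 0 < (volume.restrict Ω) (Function.support a) := by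
        rw [← integral_pos_iff_support_of_nonneg_ae (Eventually.of_forall ha0) haint]
        exact hA
      calc (0:ℝ≥0∞) < (volume.restrict Ω) (Function.support a) := h1
        _ = (volume.restrict Ω) (Function.support a ∩ Ω) := by
            rw [Measure.restrict_apply' hm, Measure.restrict_apply' hm,
              inter_assoc, inter_self]
        _ ≤ (volume.restrict Ω) (Function.support w) := by
            apply measure_mono
            rintro x ⟨hxa, hxΩ⟩
            apply mul_ne_zero hxa
            intro h
            exact hηΩ x hxΩ ((Real.rpow_eq_zero_iff_of_nonneg (hη0 x)).mp h).1
    have hbd : ∀ᵐ x ∂(volume.restrict Ω), w x ≠ 0 → ‖x‖ ≤ R := by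
      filter_upwards [ae_restrict_mem hm] with x hx _
      exact hRb x (subset_closure hx)
    obtain ⟨i, t, hsig, hQne⟩ :=
      ConeAux.key hq (volume.restrict Ω) w hw0 hwi hwpos hatomv hR0 hbd
    set u₀ : Euc N → ℝ := fun x => η x * (x i - t) with hu₀def
    have hproj : ContDiff ℝ (⊤ : ℕ∞) (fun x : Euc N => x i) := contDiff_piLp_apply 2
    have hu₀sm : ContDiff ℝ (⊤ : ℕ∞) u₀ := hηsm.mul (hproj.sub contDiff_const)
    have hu₀fr : ∀ x ∈ frontier Ω, u₀ x = 0 := by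
      intro x hx
      have hxΩ : x ∉ Ω := by
        rw [hΩo.frontier_eq] at hx
        exact hx.2
      simp [hu₀def, hηout x hxΩ]
    have hpointA : ∀ (cc e v : ℝ), 0 ≤ e →
        cc * |e * v| ^ (q-2) * (e * v) = (cc * e^(q-1)) * (|v| ^ (q-2) * v) := by
      intro cc e v he
      rcases he.lt_or_eq with h | h
      · have hee : e^(q-1) = e^(q-2)*e := by
          rw [show q-1 = (q-2)+1 by ring, Real.rpow_add_one (ne_of_gt h)]
        rw [abs_mul, abs_of_pos h, Real.mul_rpow h.le (abs_nonneg v), hee]; ring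
      · rw [← h]
        simp [Real.zero_rpow hq1ne]
    have hsig0 : qFormSigned q Ω a b u₀ = 0 := by
      have hvol : (∫ x in Ω, a x * |u₀ x| ^ (q - 2) * u₀ x) = 0 := by
        rw [show (fun x => a x * |u₀ x| ^ (q - 2) * u₀ x)
            = fun x => w x * (|x i - t| ^ (q-2) * (x i - t)) from
          funext fun x => hpointA (a x) (η x) (x i - t) (hη0 x)]
        exact hsig
      have hbdry : (∫ x, b x * |u₀ x| ^ (q - 2) * u₀ x ∂(surfMeasure N Ω)) = 0 := by
        simp only [surfMeasure]
        rw [setIntegral_congr_fun isClosed_frontier.measurableSet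
          (g := fun _ => (0:ℝ)) (fun x hx => by rw [hu₀fr x hx]; simp), integral_zero]
      simp only [qFormSigned]
      rw [hvol, hbdry, add_zero]
    have hQbdry : (∫ x, b x * |u₀ x| ^ q ∂(surfMeasure N Ω)) = 0 := by
      simp only [surfMeasure]
      rw [setIntegral_congr_fun isClosed_frontier.measurableSet
        (g := fun _ => (0:ℝ)) (fun x hx => by
          rw [hu₀fr x hx]; simp [Real.zero_rpow hqne]), integral_zero]
    have hcomp : IsCompact (closure Ω) :=
      Metric.isCompact_of_isClosed_isBounded isClosed_closure hΩb.closure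
    have hQcont : Continuous fun x : Euc N => |u₀ x| ^ q :=
      (hu₀sm.continuous.abs).rpow_const fun x => Or.inr hq0.le
    have hQint : Integrable (fun x => a x * |u₀ x| ^ q) (volume.restrict Ω) := by
      obtain ⟨C, hC⟩ := hcomp.exists_bound_of_continuousOn hQcont.continuousOn
      have h1 : Integrable (fun x => (|u₀ x| ^ q) * a x) (volume.restrict Ω) :=
        haint.bdd_mul hQcont.aestronglyMeasurable
          (by filter_upwards [ae_restrict_mem hm] with x hx
              exact hC x (subset_closure hx))
      exact h1.congr (Eventually.of_forall fun x => mul_comm _ _)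
    have hQn : ∀ x, 0 ≤ a x * |u₀ x| ^ q := fun x =>
      mul_nonneg (ha0 x) (Real.rpow_nonneg (abs_nonneg _) _)
    have himp : ∀ x, a x * |u₀ x| ^ q = 0 → w x * |x i - t| ^ q = 0 := by
      intro x hx
      rcases mul_eq_zero.mp hx with h | h
      · rw [hwdef]; simp only []; rw [h, zero_mul, zero_mul]
      · have h2 : |u₀ x| = 0 := ((Real.rpow_eq_zero_iff_of_nonneg (abs_nonneg _)).mp h).1
        rcases mul_eq_zero.mp (abs_eq_zero.mp h2) with h3 | h3
        · rw [hwdef]; simp only []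
          rw [h3, Real.zero_rpow hq1ne, mul_zero, zero_mul]
        · rw [h3]
          simp [Real.zero_rpow hqne]
    have hQvolpos : 0 < ∫ x in Ω, a x * |u₀ x| ^ q := by
      rcases (integral_nonneg (f := fun x => a x * |u₀ x| ^ q) hQn).lt_or_eq with h | h
      · exact h
      · exfalso
        apply hQne
        have h2 := (integral_eq_zero_iff_of_nonneg hQn hQint).mp h.symm
        filter_upwards [h2] with x hx
        exact himp x hx
    have hQpos : 0 < qForm q Ω a b u₀ := by
      simp only [qForm]
      rw [hQbdry, add_zero]
      exact hQvolpos
    exact finish_lemma hq hΩb hm hu₀sm hsig0 hQpos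
  · -- boundary case
    have hA' : (∫ x in Ω, a x) = 0 :=
      le_antisymm (not_lt.mp hA) (integral_nonneg ha0)
    have ha_ae : a =ᵐ[volume.restrict Ω] 0 :=
      (integral_eq_zero_iff_of_nonneg ha0 haint).mp hA'
    have hB : 0 < ∫ x, b x ∂(surfMeasure N Ω) := by
      rw [hA'] at hsum; linarith
    have hbint : Integrable b (surfMeasure N Ω) := by
      by_contra h
      rw [integral_undef h] at hB; exact lt_irrefl 0 hB
    have hatomσ : ∀ p : Euc N, (surfMeasure N Ω) {p} = 0 := by
      intro p
      have h0 : μH[(N:ℝ)-1] ({p} : Set (Euc N)) = 0 := by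
        have hcast : (((N - 1 : ℕ) : NNReal) : ℝ) = (N:ℝ) - 1 := by
          rw [NNReal.coe_natCast, Nat.cast_sub (by omega : 1 ≤ N)]; norm_num
        rw [← hcast]
        apply hausdorffMeasure_of_dimH_lt
        rw [dimH_singleton]
        exact_mod_cast (show (0:NNReal) < ((N-1 : ℕ) : NNReal) by exact_mod_cast (show 0 < N - 1 by omega))
      simp only [surfMeasure]
      rw [Measure.restrict_apply (measurableSet_singleton p)]
      exact le_antisymm (le_trans (measure_mono inter_subset_left) h0.le) zero_le
    have hfr : ∀ᵐ x ∂(surfMeasure N Ω), x ∈ frontier Ω := by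
      simp only [surfMeasure]
      exact ae_restrict_mem isClosed_frontier.measurableSet
    have hbd : ∀ᵐ x ∂(surfMeasure N Ω), b x ≠ 0 → ‖x‖ ≤ R := by
      filter_upwards [hfr] with x hx _
      exact hRb x (frontier_subset_closure hx)
    obtain ⟨i, t, hsig, hQne⟩ :=
      ConeAux.key hq (surfMeasure N Ω) b hb0 hbint hB hatomσ hR0 hbd
    set u₀ : Euc N → ℝ := fun x => x i - t with hu₀def
    have hproj : ContDiff ℝ (⊤ : ℕ∞) (fun x : Euc N => x i) := contDiff_piLp_apply 2
    have hu₀sm : ContDiff ℝ (⊤ : ℕ∞) u₀ := hproj.sub contDiff_const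
    have hvol0 : ∀ g : Euc N → ℝ, (∫ x in Ω, a x * g x) = 0 := by
      intro g
      apply integral_eq_zero_of_ae
      filter_upwards [ha_ae] with x hx
      simp only [Pi.zero_apply] at hx
      simp [hx]
    have hsig0 : qFormSigned q Ω a b u₀ = 0 := by
      simp only [qFormSigned]
      have h1 : (∫ x in Ω, a x * |u₀ x| ^ (q - 2) * u₀ x) = 0 := by
        have := hvol0 (fun x => |u₀ x| ^ (q-2) * u₀ x)
        rw [← this]
        exact integral_congr_ae (.of_forall fun x => (mul_assoc _ _ _))
      have h2 : (∫ x, b x * |u₀ x| ^ (q - 2) * u₀ x ∂(surfMeasure N Ω)) = 0 := by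
        rw [← hsig]
        exact integral_congr_ae (.of_forall fun x => (mul_assoc _ _ _))
      rw [h1, h2, add_zero]
    have hQn : ∀ x, 0 ≤ b x * |u₀ x| ^ q := fun x =>
      mul_nonneg (hb0 x) (Real.rpow_nonneg (abs_nonneg _) _)
    have hQcont : Continuous fun x : Euc N => |u₀ x| ^ q :=
      (hu₀sm.continuous.abs).rpow_const fun x => Or.inr hq0.le
    have hQint : Integrable (fun x => b x * |u₀ x| ^ q) (surfMeasure N Ω) := by
      have h1 : Integrable (fun x => (|u₀ x| ^ q) * b x) (surfMeasure N Ω) :=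
        hbint.bdd_mul (c := (R + |t|) ^ q) hQcont.aestronglyMeasurable
          (by
            filter_upwards [hfr] with x hx
            rw [Real.norm_eq_abs, abs_of_nonneg (Real.rpow_nonneg (abs_nonneg _) _)]
            apply Real.rpow_le_rpow (abs_nonneg _) _ hq0.le
            have h3 := ConeAux.coord_abs_le_norm x i
            have h4 := hRb x (frontier_subset_closure hx)
            calc |u₀ x| = |x i - t| := rfl
              _ ≤ |x i| + |t| := abs_sub _ _
              _ ≤ R + |t| := by linarith)
      exact h1.congr (Eventually.of_forall fun x => mul_comm _ _)
    have hQbpos : 0 < ∫ x, b x * |u₀ x| ^ q ∂(surfMeasure N Ω) := by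
      rcases (integral_nonneg (f := fun x => b x * |u₀ x| ^ q) hQn).lt_or_eq with h | h
      · exact h
      · exfalso
        apply hQne
        have h2 := (integral_eq_zero_iff_of_nonneg hQn hQint).mp h.symm
        filter_upwards [h2] with x hx
        exact hx
    have hQpos : 0 < qForm q Ω a b u₀ := by
      simp only [qForm]
      rw [hvol0 (fun x => |u₀ x| ^ q), zero_add]
      exact hQbpos
    exact finish_lemma hq hΩb hm hu₀sm hsig0 hQpos
end

section
/- (Remark 2) Under the standing hypotheses, define λ₁ := inf over w ∈ C∖{0} of (∫_Ω |∇w|^q dx)/(∫_Ω a|w|^q dx + ∫_{∂Ω} b|w|^q dσ) and λ̃₁ := inf over w ∈ C∖{0} of ((1/q)∫_Ω |∇w|^q dx + (1/p)∫_Ω |∇w|^p dx)/((1/q)(∫_Ω a|w|^q dx + ∫_{∂Ω} b|w|^q dσ)), where quotients with zero denominator are interpreted as +∞. Then λ₁ = λ̃₁. -/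
open MeasureTheory Filter Topology Set
open scoped ENNReal RealInnerProductSpace

section MyAux

open MeasureTheory

lemma my_gradient_const_smul {N : ℕ} {c : ℝ} (hc : c ≠ 0) (u : Euc N → ℝ) (x : Euc N) :
    gradient (c • u) x = c • gradient u x := by
  by_cases h : DifferentiableAt ℝ u x
  · have hf : fderiv ℝ (c • u) x = c • fderiv ℝ u x := fderiv_const_smul h c
    unfold gradient
    rw [hf, _root_.map_smul]
  · have h2 : ¬ DifferentiableAt ℝ (c • u) x := by
      intro h2
      exact h (by simpa [smul_smul, inv_mul_cancel₀ hc] using h2.const_smul (c⁻¹ : ℝ))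
    unfold gradient
    rw [fderiv_zero_of_not_differentiableAt h, fderiv_zero_of_not_differentiableAt h2]
    simp

lemma my_int_grad_smul {N : ℕ} (r : ℝ) (Ω : Set (Euc N)) (u : Euc N → ℝ) {c : ℝ}
    (hc : 0 < c) :
    (∫ x in Ω, ‖gradient (c • u) x‖ ^ r) = c ^ r * ∫ x in Ω, ‖gradient u x‖ ^ r := by
  have e : (fun x => ‖gradient (c • u) x‖ ^ r) = fun x => c ^ r * ‖gradient u x‖ ^ r := by
    funext x
    rw [my_gradient_const_smul hc.ne' u x, norm_smul, Real.norm_eq_abs, abs_of_pos hc,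
      Real.mul_rpow hc.le (norm_nonneg _)]
  rw [e, MeasureTheory.integral_const_mul]

lemma my_qForm_smul {N : ℕ} {q : ℝ} (Ω : Set (Euc N)) (a b : Euc N → ℝ) {c : ℝ}
    (hc : 0 < c) (u : Euc N → ℝ) :
    qForm q Ω a b (c • u) = c ^ q * qForm q Ω a b u := by
  have e : ∀ w : Euc N → ℝ, (fun x => w x * |(c • u) x| ^ q)
      = fun x => c ^ q * (w x * |u x| ^ q) := by
    intro w
    funext x
    simp only [Pi.smul_apply, smul_eq_mul, abs_mul, abs_of_pos hc]
    rw [Real.mul_rpow hc.le (abs_nonneg _)]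
    ring
  unfold qForm
  rw [e a, e b, MeasureTheory.integral_const_mul, MeasureTheory.integral_const_mul]
  ring

lemma my_qFormSigned_smul {N : ℕ} {q : ℝ} (Ω : Set (Euc N)) (a b : Euc N → ℝ) {c : ℝ}
    (hc : 0 < c) (u : Euc N → ℝ) :
    qFormSigned q Ω a b (c • u) = c ^ (q - 1) * qFormSigned q Ω a b u := by
  have hcc : c ^ (q - 2) * c = c ^ (q - 1) := by
    rw [show q - 1 = (q - 2) + 1 by ring, Real.rpow_add hc, Real.rpow_one]
  have e : ∀ w : Euc N → ℝ, (fun x => w x * |(c • u) x| ^ (q - 2) * (c • u) x)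
      = fun x => c ^ (q - 1) * (w x * |u x| ^ (q - 2) * u x) := by
    intro w
    funext x
    simp only [Pi.smul_apply, smul_eq_mul, abs_mul, abs_of_pos hc]
    rw [Real.mul_rpow hc.le (abs_nonneg _), ← hcc]
    ring
  unfold qFormSigned
  rw [e a, e b, MeasureTheory.integral_const_mul, MeasureTheory.integral_const_mul]
  ring

lemma my_MemW1_smul {N : ℕ} {r : ℝ} {Ω : Set (Euc N)} {u : Euc N → ℝ} {c : ℝ} (hc : c ≠ 0)
    (h : MemW1 r Ω u) : MemW1 r Ω (c • u) := by
  refine ⟨h.1.const_smul c, ?_⟩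
  have e : (fun x => gradient (c • u) x) = fun x => c • gradient u x :=
    funext (my_gradient_const_smul hc u)
  rw [e]
  exact h.2.const_smul c

lemma my_nontriv_smul {N : ℕ} {Ω : Set (Euc N)} {u : Euc N → ℝ} {c : ℝ} (hc : c ≠ 0)
    (h : Nontriv Ω u) : Nontriv Ω (c • u) := by
  intro hcon
  apply h
  filter_upwards [hcon] with x hx
  simp only [Pi.smul_apply, smul_eq_mul, Pi.zero_apply] at hx ⊢
  exact (mul_eq_zero.1 hx).resolve_left hc

lemma my_qForm_nonneg {N : ℕ} {q : ℝ} {Ω : Set (Euc N)} {a b : Euc N → ℝ}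
    (ha : ∀ x, 0 ≤ a x) (hb : ∀ x, 0 ≤ b x) (u : Euc N → ℝ) :
    0 ≤ qForm q Ω a b u := by
  unfold qForm
  have h1 : 0 ≤ ∫ x in Ω, a x * |u x| ^ q :=
    integral_nonneg fun x => mul_nonneg (ha x) (Real.rpow_nonneg (abs_nonneg _) _)
  have h2 : 0 ≤ ∫ x, b x * |u x| ^ q ∂(surfMeasure N Ω) :=
    integral_nonneg fun x => mul_nonneg (hb x) (Real.rpow_nonneg (abs_nonneg _) _)
  linarith

end MyAux

/-- Remark 2: the two Rayleigh-type infima coincide: `λ₁ = λ̃₁`. -/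
theorem lambda1_eq_lambda1tilde {N : ℕ} (hN : 2 ≤ N) (Ω : Set (Euc N)) (a b : Euc N → ℝ) (p q : ℝ)
    (hp : 1 < p) (hq : 2 < q) (hpq : p ≠ q)
    (hΩ : IsBoundedSmoothDomain Ω) (hab : WeightHyp Ω a b) :
    lambda1 p q Ω a b = lambda1tilde p q Ω a b := by
  obtain ⟨-, -, ha0, hb0, -⟩ := hab
  have hq0 : (0:ℝ) < q := by linarith
  have hp0 : (0:ℝ) < p := by linarith
  have hqne : q ≠ 0 := hq0.ne'
  have hpne : p ≠ 0 := hp0.ne'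
  unfold lambda1 lambda1tilde
  set S : Set ℝ := {r : ℝ | ∃ u ∈ coneC p q Ω a b, Nontriv Ω u ∧ qForm q Ω a b u ≠ 0 ∧
    r = (∫ x in Ω, ‖gradient u x‖ ^ q) / qForm q Ω a b u} with hSdef
  set T : Set ℝ := {r : ℝ | ∃ u ∈ coneC p q Ω a b, Nontriv Ω u ∧ qForm q Ω a b u ≠ 0 ∧
    r = ((1 / q) * (∫ x in Ω, ‖gradient u x‖ ^ q) + (1 / p) * (∫ x in Ω, ‖gradient u x‖ ^ p)) /
      ((1 / q) * qForm q Ω a b u)} with hTdef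
  have hIq : ∀ u : Euc N → ℝ, 0 ≤ ∫ x in Ω, ‖gradient u x‖ ^ q :=
    fun u => integral_nonneg fun x => Real.rpow_nonneg (norm_nonneg _) _
  have hIp : ∀ u : Euc N → ℝ, 0 ≤ ∫ x in Ω, ‖gradient u x‖ ^ p :=
    fun u => integral_nonneg fun x => Real.rpow_nonneg (norm_nonneg _) _
  have hDpos : ∀ u : Euc N → ℝ, qForm q Ω a b u ≠ 0 → 0 < qForm q Ω a b u :=
    fun u hne => lt_of_le_of_ne (my_qForm_nonneg ha0 hb0 u) (Ne.symm hne)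
  have hSnn : ∀ r ∈ S, (0:ℝ) ≤ r := by
    rintro r ⟨u, hcone, hnt, hne, rfl⟩
    exact div_nonneg (hIq u) (my_qForm_nonneg ha0 hb0 u)
  have hTnn : ∀ r ∈ T, (0:ℝ) ≤ r := by
    rintro r ⟨u, hcone, hnt, hne, rfl⟩
    refine div_nonneg (add_nonneg (mul_nonneg (by positivity) (hIq u))
      (mul_nonneg (by positivity) (hIp u)))
      (mul_nonneg (by positivity) (my_qForm_nonneg ha0 hb0 u))
  have hSbdd : BddBelow S := ⟨0, hSnn⟩
  have hTbdd : BddBelow T := ⟨0, hTnn⟩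
  by_cases hSe : S.Nonempty
  · have hTne : T.Nonempty := by
      obtain ⟨s, u, hcone, hnt, hne, -⟩ := hSe
      exact ⟨_, u, hcone, hnt, hne, rfl⟩
    apply le_antisymm
    · -- sInf S ≤ sInf T
      apply le_csInf hTne
      rintro t ⟨u, hcone, hnt, hne, rfl⟩
      have hD := hDpos u hne
      refine le_trans (csInf_le hSbdd ⟨u, hcone, hnt, hne, rfl⟩) ?_
      rw [div_le_div_iff₀ hD (by positivity)]
      have h1 : 0 ≤ (1/p) * (∫ x in Ω, ‖gradient u x‖ ^ p) * qForm q Ω a b u :=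
        mul_nonneg (mul_nonneg (by positivity) (hIp u)) hD.le
      nlinarith [hIq u]
    · -- sInf T ≤ sInf S
      apply le_csInf hSe
      rintro s ⟨u, hcone, hnt, hne, rfl⟩
      set A := ∫ x in Ω, ‖gradient u x‖ ^ q with hA
      set B := ∫ x in Ω, ‖gradient u x‖ ^ p with hB
      set D := qForm q Ω a b u with hDdef
      have hD : (0:ℝ) < D := hDpos u hne
      have hBnn : (0:ℝ) ≤ B := hIp u
      apply le_of_forall_pos_le_add
      intro ε hε
      set K := q / p * B / D with hKdef
      have hKnn : (0:ℝ) ≤ K :=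
        div_nonneg (mul_nonneg (by positivity) hBnn) hD.le
      obtain ⟨c, hc0, hcK⟩ : ∃ c : ℝ, 0 < c ∧ c ^ (p - q) * K ≤ ε := by
        rcases eq_or_lt_of_le hKnn with hK0 | hKpos
        · exact ⟨1, one_pos, by rw [← hK0, mul_zero]; exact hε.le⟩
        · refine ⟨(ε / K) ^ (1 / (p - q)), Real.rpow_pos_of_pos (div_pos hε hKpos) _, ?_⟩
          rw [← Real.rpow_mul (div_pos hε hKpos).le, one_div_mul_cancel (sub_ne_zero.2 hpq),
            Real.rpow_one, div_mul_cancel₀ _ (ne_of_gt hKpos)]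
      have hcq : (0:ℝ) < c ^ q := Real.rpow_pos_of_pos hc0 q
      have hcp : c ^ p = c ^ (p - q) * c ^ q := by
        rw [← Real.rpow_add hc0]; norm_num
      have hmem : ((1 / q) * (∫ x in Ω, ‖gradient (c • u) x‖ ^ q)
          + (1 / p) * (∫ x in Ω, ‖gradient (c • u) x‖ ^ p)) /
          ((1 / q) * qForm q Ω a b (c • u)) ∈ T := by
        refine ⟨c • u, ⟨my_MemW1_smul hc0.ne' hcone.1, ?_⟩,
          my_nontriv_smul hc0.ne' hnt, ?_, rfl⟩
        · rw [my_qFormSigned_smul Ω a b hc0 u, hcone.2, mul_zero]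
        · rw [my_qForm_smul Ω a b hc0 u]
          exact mul_ne_zero hcq.ne' hne
      refine le_trans (csInf_le hTbdd hmem) ?_
      rw [my_qForm_smul Ω a b hc0 u, my_int_grad_smul q Ω u hc0, my_int_grad_smul p Ω u hc0,
        ← hA, ← hB, ← hDdef]
      have heq : ((1 / q) * (c ^ q * A) + (1 / p) * (c ^ p * B)) / ((1 / q) * (c ^ q * D))
          = A / D + c ^ (p - q) * K := by
        rw [hcp, hKdef]
        field_simp
      rw [heq]
      linarith [hcK]
  · have hT0 : ¬ T.Nonempty := by
      rintro ⟨t, u, hcone, hnt, hne, -⟩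
      exact hSe ⟨_, u, hcone, hnt, hne, rfl⟩
    rw [Set.not_nonempty_iff_eq_empty.1 hSe, Set.not_nonempty_iff_eq_empty.1 hT0]
end
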